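/- arXiv:1708.07884 — 2 statements merged into one kernel-verified Lean document; each statement's English description precedes it below -/
import Mathlib

section
/- For every positive integer n, 3 · ∏_{i=1}^{n} (36i^3 + 42i^2 − 12i − 9)/(36i^3 − 6i^2 − 8i − 1) > 3n + 3, as rational numbers. -/
lemma factor_gt (i : ℕ) (hi : 1 ≤ i) :
    (36 * (i : ℚ) ^ 3 + 42 * i ^ 2 - 12 * i - 9) /
      (36 * (i : ℚ) ^ 3 - 6 * i ^ 2 - 8 * i - 1) > ((i : ℚ) + 1) / i := by
  have h1 : (1 : ℚ) ≤ i := by exact_mod_cast hi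
  have hipos : (0 : ℚ) < i := by linarith
  have hden : (0 : ℚ) < 36 * (i : ℚ) ^ 3 - 6 * i ^ 2 - 8 * i - 1 := by nlinarith
  rw [gt_iff_lt, div_lt_div_iff₀ hipos hden]
  nlinarith [pow_pos hipos 3, pow_pos hipos 2]

lemma step_lem (P f x : ℚ) (hx : 0 ≤ x) (hP : 3 * P > 3 * x + 3)
    (hf : f > (x + 2) / (x + 1)) : 3 * (P * f) > 3 * (x + 1) + 3 := by
  have hx1 : (0 : ℚ) < x + 1 := by linarith
  have hf' : f * (x + 1) > x + 2 := by
    rw [gt_iff_lt, div_lt_iff₀ hx1] at hf; linarith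
  have hfpos : 0 < f := by nlinarith
  have h1 : (3 * P - (3 * x + 3)) * f > 0 := mul_pos (by linarith) hfpos
  nlinarith

theorem tpe_gt_linear (n : ℕ) (hn : 1 ≤ n) :
    3 * ∏ i ∈ Finset.Icc 1 n,
        (36 * (i : ℚ) ^ 3 + 42 * i ^ 2 - 12 * i - 9) /
          (36 * (i : ℚ) ^ 3 - 6 * i ^ 2 - 8 * i - 1)
      > 3 * (n : ℚ) + 3 := by
  induction n with
  | zero => omega
  | succ m ih =>
    rcases Nat.eq_or_lt_of_le hn with h | h
    · simp [← h]
      norm_num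
    · have hm : 1 ≤ m := by omega
      have key := ih hm
      rw [Finset.prod_Icc_succ_top (by omega : 1 ≤ m + 1)]
      have hf := factor_gt (m + 1) (by omega)
      push_cast at hf ⊢
      have hf2 : (36 * ((m:ℚ)+1) ^ 3 + 42 * ((m:ℚ)+1) ^ 2 - 12 * ((m:ℚ)+1) - 9) /
          (36 * ((m:ℚ)+1) ^ 3 - 6 * ((m:ℚ)+1) ^ 2 - 8 * ((m:ℚ)+1) - 1)
          > ((m:ℚ) + 2) / ((m:ℚ) + 1) := by
        have e : ((m:ℚ) + 1 + 1) = (m:ℚ) + 2 := by ring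
        rw [e] at hf; exact hf
      have := step_lem _ _ (m : ℚ) (by positivity) key hf2
      linarith
end

section
/- For every positive integer n, (6n^2 + 10n + 3) · ∏_{i=1}^{n} (6i−3)/(6i+1) > 3(n+1), as rational numbers. -/
theorem atpg_tpr_gt (n : ℕ) (hn : 1 ≤ n) :
    (6 * (n : ℚ) ^ 2 + 10 * n + 3) *
        ∏ i ∈ Finset.Icc 1 n, (6 * (i : ℚ) - 3) / (6 * (i : ℚ) + 1)
      > 3 * ((n : ℚ) + 1) := by
  induction n with
  | zero => omega
  | succ m ih =>
    rcases Nat.eq_zero_or_pos m with h | h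
    · subst h
      norm_num
    · have IH := ih h
      have hP : 0 < ∏ i ∈ Finset.Icc 1 m, (6 * (i : ℚ) - 3) / (6 * (i : ℚ) + 1) := by
        apply Finset.prod_pos
        intro i hi
        have h1 : 1 ≤ i := (Finset.mem_Icc.mp hi).1
        have h1' : (1 : ℚ) ≤ (i : ℚ) := by exact_mod_cast h1
        apply div_pos <;> linarith
      rw [Finset.prod_Icc_succ_top (by omega : 1 ≤ m + 1)]
      set P := ∏ i ∈ Finset.Icc 1 m, (6 * (i : ℚ) - 3) / (6 * (i : ℚ) + 1) with hPdef
      have hx : (1 : ℚ) ≤ (m : ℚ) := by exact_mod_cast h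
      push_cast
      set x : ℚ := (m : ℚ) with hxdef
      have hd : (0 : ℚ) < 6 * (x + 1) + 1 := by linarith
      have key : (6 * (x + 1) ^ 2 + 10 * (x + 1) + 3) * (P * ((6 * (x + 1) - 3) / (6 * (x + 1) + 1)))
          = ((6 * (x + 1) ^ 2 + 10 * (x + 1) + 3) * P * (6 * (x + 1) - 3)) / (6 * (x + 1) + 1) := by
        ring
      rw [gt_iff_lt, key, lt_div_iff₀ hd]
      have hA : (0 : ℚ) < 6 * x ^ 2 + 22 * x + 19 := by nlinarith
      have hB : (0 : ℚ) < 6 * x ^ 2 + 10 * x + 3 := by nlinarith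
      have h1 : (6 * x ^ 2 + 10 * x + 3) * P * (6 * x + 3) > 3 * (x + 1) * (6 * x + 3) := by
        nlinarith [IH]
      nlinarith [mul_lt_mul_of_pos_right h1 hA, hP, hx]
end
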